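/- Let P : ℕ → [0,1] be a probability mass function with P(k) = 0 for all k < d_⋆ for some integer d_⋆ ≥ 3, with finite mean m := Σ_k k·P(k) ∈ (0,∞) and finite second factorial moment, and set q(k) := k·P(k)/m (the size-biased law) and β_⋆ := atanh(1/(d_⋆ − 1)). For β > 0 define f_β : [0,∞] → [0,β] by f_β(h) = atanh( tanh(β)·tanh(h) ) (with f_β(∞) = β), and define the map Φ_β on Borel probability measures μ on [0,∞] by letting Φ_β(μ) be the law of Σ_{ℓ=1}^{K−1} f_β(h_ℓ), where K has law q and (h_ℓ)_{ℓ≥1} are i.i.d. with law μ, independent of K. Fix β ≥ β₀ > β_⋆ and suppose the iterates Φ_β^t(δ_∞) converge weakly as t → ∞ to a probability measure ν_β^+ on [0,∞], and likewise Φ_{β₀}^t(δ_∞) converge weakly to ν_{β₀}^+. Then for every initial probability measure μ₀ on [0,∞] that stochastically dominates ν_{β₀}^+ (i.e., μ₀([s,∞]) ≥ ν_{β₀}^+([s,∞]) for all s ≥ 0), the iterates Φ_β^t(μ₀) converge weakly to ν_β^+ as t → ∞. -/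

import Mathlib

open MeasureTheory Filter
open scoped ENNReal

/-- the belief-propagation update function `f_β : [0,∞] → [0,β]`,
`f_β(h) = atanh(tanh β · tanh h)`, with `f_β(∞) = β = atanh(tanh β)`. -/
noncomputable def bpFun (β : ℝ) (h : ℝ≥0∞) : ℝ≥0∞ :=
  if h = ⊤ then ENNReal.ofReal β
  else ENNReal.ofReal ((1 / 2) * Real.log
    ((1 + Real.tanh β * Real.tanh h.toReal) / (1 - Real.tanh β * Real.tanh h.toReal)))

/-- the belief-propagation map `Φ_β` on probability measures on `[0,∞]` : `Φ_β(μ)`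
is the law of `Σ_{ℓ=1}^{K-1} f_β(h_ℓ)`, where `K` has the size-biased law
`q(k) = k P(k)/m` and the `h_ℓ` are i.i.d. with law `μ`, independent of `K`. -/
noncomputable def bpMap (P : ℕ → ℝ) (m β : ℝ) (μ : Measure ℝ≥0∞) : Measure ℝ≥0∞ :=
  Measure.sum fun k : ℕ =>
    ENNReal.ofReal ((k : ℝ) * P k / m) •
      Measure.map (fun h : Fin (k - 1) → ℝ≥0∞ => ∑ ℓ, bpFun β (h ℓ))
        (Measure.pi fun _ => μ)

/-- weak convergence of a sequence of measures on `[0,∞]` : convergence of the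
integrals of every (automatically bounded) continuous function. -/
def WeakTendsto (μs : ℕ → Measure ℝ≥0∞) (ν : Measure ℝ≥0∞) : Prop :=
  ∀ g : ℝ≥0∞ → ℝ, Continuous g →
    Tendsto (fun t => ∫ x, g x ∂(μs t)) atTop (nhds (∫ x, g x ∂ν))


/-!
Let `L θ x = artanh (θ tanh x)` (this is `bpReal`), so that `bpFun β` is `L (tanh β)` on finite
fields. Since
`L θ` has slope `θ` at `0` and `(d⋆ - 1) tanh β₀ > 1`, there is `c > 0` with
`x ≤ (d⋆ - 1) L (tanh β₀) x` on `[0, c]`; as every vertex has at least `d⋆ - 1` children, the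
recursions at `β₀` and at `β ≥ β₀` keep `[c, ∞]` almost surely, so `ν_{β₀}⁺`, and with it `μ₀`,
live on `[c/2, ∞]`.

Now run the recursions started from `μ₀` and from `δ_∞` on the same tree. After one step the two
messages satisfy `x ≤ y ≤ (1 + R) x`. On `[c/2, ∞)` the strictly concave and bounded function
`L (tanh β)` has elasticity `x L'(x) / L(x) ≤ ρ < 1`, so every further step replaces `R` by `ρ R`.
The two messages thus become multiplicatively close, and on the compact space `[0, ∞]` this
forces the integrals of any continuous function against the two laws to merge.
-/

open Set

namespace Real

theorem hasDerivAt_tanh (x : ℝ) : HasDerivAt tanh (1 - tanh x ^ 2) x := by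
  have hc : cosh x ≠ 0 := (cosh_pos x).ne'
  have h := (hasDerivAt_sinh x).div (hasDerivAt_cosh x) hc
  rw [show sinh / cosh = tanh from funext fun y => (tanh_eq_sinh_div_cosh y).symm] at h
  refine h.congr_deriv ?_
  rw [tanh_eq_sinh_div_cosh]
  field_simp

theorem tanh_strictMono : StrictMono tanh :=
  strictMono_of_hasDerivAt_pos hasDerivAt_tanh fun x => by linarith [tanh_sq_lt_one x]

@[fun_prop]
theorem continuous_tanh : Continuous tanh :=
  continuous_iff_continuousAt.2 fun x => (hasDerivAt_tanh x).continuousAt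

theorem tanh_pos {x : ℝ} (hx : 0 < x) : 0 < tanh x := by
  simpa using tanh_strictMono hx

theorem tanh_nonneg {x : ℝ} (hx : 0 ≤ x) : 0 ≤ tanh x := by
  simpa using tanh_strictMono.monotone hx

theorem hasDerivAt_artanh {x : ℝ} (hx : x ∈ Ioo (-1) 1) :
    HasDerivAt artanh (1 / (1 - x ^ 2)) x := by
  obtain ⟨h₁, h₂⟩ := hx
  have heq : (fun y => (log (1 + y) - log (1 - y)) / 2) =ᶠ[nhds x] artanh := by
    filter_upwards [Ioo_mem_nhds h₁ h₂] with y ⟨hy₁, hy₂⟩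
    rw [artanh_eq_half_log ⟨hy₁.le, hy₂.le⟩, log_div (by linarith) (by linarith)]
    ring
  have h := ((((hasDerivAt_id x).const_add 1).log (by simp; linarith)).sub
    (((hasDerivAt_id x).const_sub 1).log (by simp; linarith))).div_const 2
  refine (h.congr_of_eventuallyEq heq.symm).congr_deriv ?_
  have : 1 - x ≠ 0 := by linarith
  have : 1 + x ≠ 0 := by linarith
  have : 1 - x ^ 2 ≠ 0 := by nlinarith
  simp only [id]
  field_simp
  ring

theorem abs_mul_tanh_lt_one {θ : ℝ} (hθ : |θ| ≤ 1) (x : ℝ) : |θ * tanh x| < 1 := by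
  rw [abs_mul]
  nlinarith [abs_nonneg θ, abs_nonneg (tanh x), abs_tanh_lt_one x]

theorem tanh_mem_Ioo {β : ℝ} (hβ : 0 < β) : tanh β ∈ Ioo 0 1 := ⟨tanh_pos hβ, tanh_lt_one β⟩

end Real

theorem exists_image_sub_eq_mul_sub {f f' : ℝ → ℝ} {a b : ℝ} (hab : a < b)
    (hf : ∀ x, HasDerivAt f (f' x) x) : ∃ ξ ∈ Ioo a b, f b - f a = f' ξ * (b - a) := by
  obtain ⟨ξ, hξ, h⟩ := exists_hasDerivAt_eq_slope f f' hab
    (fun x _ => (hf x).continuousAt.continuousWithinAt) fun x _ => hf x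
  exact ⟨ξ, hξ, by rw [h, div_mul_cancel₀ _ (sub_pos.2 hab).ne']⟩

theorem image_sub_le_mul_sub_of_antitoneOn {f f' : ℝ → ℝ} {a b : ℝ} (hab : a ≤ b)
    (hf : ∀ x, HasDerivAt f (f' x) x) (hf' : AntitoneOn f' (Icc a b)) :
    f b - f a ≤ f' a * (b - a) := by
  rcases hab.eq_or_lt with rfl | hab
  · simp
  obtain ⟨ξ, hξ, h⟩ := exists_image_sub_eq_mul_sub hab hf
  rw [h]
  exact mul_le_mul_of_nonneg_right
    (hf' ⟨le_rfl, hab.le⟩ (Ioo_subset_Icc_self hξ) hξ.1.le) (sub_pos.2 hab).le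

theorem mul_sub_le_image_sub_of_antitoneOn {f f' : ℝ → ℝ} {a b : ℝ} (hab : a ≤ b)
    (hf : ∀ x, HasDerivAt f (f' x) x) (hf' : AntitoneOn f' (Icc a b)) :
    f' b * (b - a) ≤ f b - f a := by
  rcases hab.eq_or_lt with rfl | hab
  · simp
  obtain ⟨ξ, hξ, h⟩ := exists_image_sub_eq_mul_sub hab hf
  rw [h]
  exact mul_le_mul_of_nonneg_right
    (hf' (Ioo_subset_Icc_self hξ) ⟨hab.le, le_rfl⟩ hξ.2.le) (sub_pos.2 hab).le

theorem mul_sub_lt_image_sub_of_strictAntiOn {f f' : ℝ → ℝ} {a b : ℝ} (hab : a < b)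
    (hf : ∀ x, HasDerivAt f (f' x) x) (hf' : StrictAntiOn f' (Icc a b)) :
    f' b * (b - a) < f b - f a := by
  obtain ⟨ξ, hξ, h⟩ := exists_image_sub_eq_mul_sub hab hf
  rw [h]
  exact mul_lt_mul_of_pos_right
    (hf' (Ioo_subset_Icc_self hξ) ⟨hab.le, le_rfl⟩ hξ.2) (sub_pos.2 hab)


theorem abs_le_one_of_mem_Ioo {θ : ℝ} (hθ : θ ∈ Ioo 0 1) : |θ| ≤ 1 :=
  abs_le.2 ⟨by linarith [hθ.1], hθ.2.le⟩

open Real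


noncomputable def bpReal (θ x : ℝ) : ℝ := artanh (θ * tanh x)

noncomputable def bpDeriv (θ x : ℝ) : ℝ := θ * (1 - tanh x ^ 2) / (1 - (θ * tanh x) ^ 2)

theorem hasDerivAt_bpReal {θ : ℝ} (hθ : |θ| ≤ 1) (x : ℝ) :
    HasDerivAt (bpReal θ) (bpDeriv θ x) x := by
  have h := (hasDerivAt_artanh (abs_lt.1 (abs_mul_tanh_lt_one hθ x))).comp x
    ((hasDerivAt_tanh x).const_mul θ)
  refine h.congr_deriv ?_
  rw [bpDeriv]
  ring

theorem bpReal_zero (θ : ℝ) : bpReal θ 0 = 0 := by simp [bpReal, artanh_zero]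

theorem bpDeriv_zero (θ : ℝ) : bpDeriv θ 0 = θ := by simp [bpDeriv]

theorem continuous_bpDeriv {θ : ℝ} (hθ : |θ| ≤ 1) : Continuous (bpDeriv θ) := by
  refine Continuous.div (by fun_prop) (by fun_prop) fun x => ?_
  have := abs_mul_tanh_lt_one hθ x
  nlinarith [sq_abs (θ * tanh x), abs_nonneg (θ * tanh x)]

section bpReal

variable {θ : ℝ}

theorem bpDeriv_nonneg (hθ : θ ∈ Ioo 0 1) (x : ℝ) : 0 ≤ bpDeriv θ x := by
  have h1 := abs_mul_tanh_lt_one (abs_le_one_of_mem_Ioo hθ) x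
  have h2 := tanh_sq_lt_one x
  have : (θ * tanh x) ^ 2 < 1 := by nlinarith [sq_abs (θ * tanh x), abs_nonneg (θ * tanh x)]
  exact div_nonneg (mul_nonneg hθ.1.le (by linarith)) (by linarith)

theorem strictAntiOn_bpDeriv (hθ : θ ∈ Ioo 0 1) : StrictAntiOn (bpDeriv θ) (Ici 0) := by
  intro x hx y _ hxy
  have ht : tanh x < tanh y := tanh_strictMono hxy
  have ht0 : 0 ≤ tanh x := tanh_nonneg hx
  have hty := tanh_lt_one y
  obtain ⟨hθ0, hθ1⟩ := hθ
  have hθx : 0 ≤ θ * tanh x := mul_nonneg hθ0.le ht0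
  have hθxy : θ * tanh x ≤ θ * tanh y := mul_le_mul_of_nonneg_left ht.le hθ0.le
  have hθy : θ * tanh y < 1 := by nlinarith
  have hx1 : (θ * tanh x) ^ 2 < 1 := pow_lt_one₀ hθx (hθxy.trans_lt hθy) two_ne_zero
  have hy1 : (θ * tanh y) ^ 2 < 1 := pow_lt_one₀ (hθx.trans hθxy) hθy two_ne_zero
  rw [bpDeriv, bpDeriv, div_lt_div_iff₀ (by linarith) (by linarith)]
  nlinarith [mul_pos (mul_pos hθ0 (sub_pos.2 hθ1)) (mul_pos (by linarith : 0 < tanh y - tanh x)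
    (by linarith : 0 < tanh y + tanh x)), mul_pos hθ0 hθ0]

theorem bpReal_mono (hθ : θ ∈ Ioo 0 1) {x y : ℝ} (hxy : x ≤ y) : bpReal θ x ≤ bpReal θ y := by
  have hx := abs_lt.1 (abs_mul_tanh_lt_one (abs_le_one_of_mem_Ioo hθ) x)
  have hy := abs_lt.1 (abs_mul_tanh_lt_one (abs_le_one_of_mem_Ioo hθ) y)
  exact artanh_le_artanh hx.1 hy.2
    (mul_le_mul_of_nonneg_left (tanh_strictMono.monotone hxy) hθ.1.le)

theorem bpReal_mono_left {θ₀ : ℝ} (hθ₀ : θ₀ ∈ Ioo 0 1) (hθ : θ ∈ Ioo 0 1) (hθθ : θ₀ ≤ θ)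
    {x : ℝ} (hx : 0 ≤ x) : bpReal θ₀ x ≤ bpReal θ x := by
  have h₀ := abs_lt.1 (abs_mul_tanh_lt_one (abs_le_one_of_mem_Ioo hθ₀) x)
  have h := abs_lt.1 (abs_mul_tanh_lt_one (abs_le_one_of_mem_Ioo hθ) x)
  exact artanh_le_artanh h₀.1 h.2 (mul_le_mul_of_nonneg_right hθθ (tanh_nonneg hx))

theorem bpReal_pos (hθ : θ ∈ Ioo 0 1) {x : ℝ} (hx : 0 < x) : 0 < bpReal θ x :=
  artanh_pos ⟨mul_pos hθ.1 (tanh_pos hx),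
    (abs_lt.1 (abs_mul_tanh_lt_one (abs_le_one_of_mem_Ioo hθ) x)).2⟩

theorem bpReal_le_artanh (hθ : θ ∈ Ioo 0 1) (x : ℝ) : bpReal θ x ≤ artanh θ :=
  artanh_le_artanh (abs_lt.1 (abs_mul_tanh_lt_one (abs_le_one_of_mem_Ioo hθ) x)).1 hθ.2
    (mul_le_of_le_one_right hθ.1.le (tanh_lt_one x).le)

theorem exists_le_mul_bpReal (hθ : θ ∈ Ioo 0 1) {n : ℝ} (hn : 1 < n * θ) :
    ∃ c > 0, ∀ x ∈ Icc 0 c, x ≤ n * bpReal θ x := by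
  have hnpos : 0 < n := pos_of_mul_pos_left (by linarith) hθ.1.le
  have hlt : 1 / n < bpDeriv θ 0 := by
    rw [bpDeriv_zero, div_lt_iff₀ hnpos]; linarith
  obtain ⟨c, hc, hcθ⟩ : ∃ c > 0, 1 / n < bpDeriv θ c :=
    (((continuous_bpDeriv (abs_le_one_of_mem_Ioo hθ)).tendsto 0).eventually
      (lt_mem_nhds hlt)).exists_gt
  refine ⟨c, hc, fun x ⟨hx0, hxc⟩ => ?_⟩
  have htangent := mul_sub_le_image_sub_of_antitoneOn hx0
    (hasDerivAt_bpReal (abs_le_one_of_mem_Ioo hθ)) ((strictAntiOn_bpDeriv hθ).antitoneOn.mono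
      fun y hy => hy.1)
  have hderiv : 1 / n ≤ bpDeriv θ x :=
    hcθ.le.trans ((strictAntiOn_bpDeriv hθ).antitoneOn hx0 hc.le hxc)
  rw [bpReal_zero, sub_zero, sub_zero] at htangent
  rw [div_le_iff₀ hnpos] at hderiv
  nlinarith

theorem exists_bpReal_contraction (hθ : θ ∈ Ioo 0 1) {c : ℝ} (hc : 0 < c) :
    ∃ ρ ∈ Ico (0 : ℝ) 1, ∀ ⦃x y r : ℝ⦄, 0 ≤ r → c ≤ x → x ≤ y → y ≤ (1 + r) * x →
      bpReal θ y ≤ (1 + ρ * r) * bpReal θ x := by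
  have hL := hasDerivAt_bpReal (abs_le_one_of_mem_Ioo hθ)
  have hanti : AntitoneOn (bpDeriv θ) (Ici 0) := (strictAntiOn_bpDeriv hθ).antitoneOn
  set M := artanh θ
  set δ := bpReal θ c - c * bpDeriv θ c
  have hδ : 0 < δ := by
    have := mul_sub_lt_image_sub_of_strictAntiOn hc hL
      ((strictAntiOn_bpDeriv hθ).mono fun y hy => hy.1)
    rw [bpReal_zero, sub_zero, sub_zero] at this
    linarith
  have hδM : δ ≤ M := by
    linarith [bpReal_le_artanh hθ c, mul_nonneg hc.le (bpDeriv_nonneg hθ c)]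
  have hM : 0 < M := hδ.trans_le hδM
  -- `δ` is the strict-concavity gap of the tangent at `c`; with `bpReal θ ≤ M` it caps the
  -- elasticity `x * bpDeriv θ x / bpReal θ x` on `[c, ∞)`
  have helast : ∀ x, c ≤ x → x * bpDeriv θ x ≤ (1 - δ / M) * bpReal θ x := by
    intro x hcx
    have h1 := mul_sub_le_image_sub_of_antitoneOn hcx hL (hanti.mono fun y hy => hc.le.trans hy.1)
    have h2 := mul_le_mul_of_nonneg_left (hanti hc.le (hc.le.trans hcx) hcx) hc.le
    have h3 : δ / M * bpReal θ x ≤ δ := by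
      rw [div_mul_eq_mul_div, div_le_iff₀ hM]
      exact mul_le_mul_of_nonneg_left (bpReal_le_artanh hθ x) hδ.le
    nlinarith
  refine ⟨1 - δ / M, ⟨by rw [sub_nonneg, div_le_one hM]; exact hδM, by
    linarith [div_pos hδ hM]⟩, fun x y r hr hcx hxy hyx => ?_⟩
  have hx0 : 0 ≤ x := hc.le.trans hcx
  have h1 := image_sub_le_mul_sub_of_antitoneOn hxy hL (hanti.mono fun y hy => hx0.trans hy.1)
  have h2 : bpDeriv θ x * (y - x) ≤ bpDeriv θ x * (r * x) :=
    mul_le_mul_of_nonneg_left (by linarith) (bpDeriv_nonneg hθ x)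
  nlinarith [helast x hcx]

end bpReal


theorem bpFun_top (β : ℝ) : bpFun β ⊤ = ENNReal.ofReal β := if_pos rfl

theorem bpFun_of_ne_top (β : ℝ) {h : ℝ≥0∞} (hh : h ≠ ⊤) :
    bpFun β h = ENNReal.ofReal (bpReal (tanh β) h.toReal) := by
  rw [bpFun, if_neg hh, bpReal,
    artanh_eq_half_log (abs_le.1 (abs_mul_tanh_lt_one (abs_tanh_lt_one β).le h.toReal).le)]

theorem bpFun_ofReal (β : ℝ) {x : ℝ} (hx : 0 ≤ x) :
    bpFun β (ENNReal.ofReal x) = ENNReal.ofReal (bpReal (tanh β) x) := by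
  rw [bpFun_of_ne_top β ENNReal.ofReal_ne_top, ENNReal.toReal_ofReal hx]

theorem bpFun_mono {β : ℝ} (hβ : 0 < β) : Monotone (bpFun β) := by
  intro u v huv
  rcases eq_or_ne v ⊤ with rfl | hv
  · rw [bpFun_top]
    rcases eq_or_ne u ⊤ with rfl | hu
    · rw [bpFun_top]
    rw [bpFun_of_ne_top β hu]
    exact ENNReal.ofReal_le_ofReal ((bpReal_le_artanh (tanh_mem_Ioo hβ) _).trans_eq
      (artanh_tanh β))
  have hu : u ≠ ⊤ := ne_top_of_le_ne_top hv huv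
  rw [bpFun_of_ne_top β hu, bpFun_of_ne_top β hv]
  exact ENNReal.ofReal_le_ofReal (bpReal_mono (tanh_mem_Ioo hβ) (ENNReal.toReal_mono hv huv))

theorem measurable_bpFun {β : ℝ} (hβ : 0 < β) : Measurable (bpFun β) := (bpFun_mono hβ).measurable

def nearDiag (r : ℝ) : Set (ℝ≥0∞ × ℝ≥0∞) :=
  {p | p.1 ≤ p.2 ∧ p.2 ≤ ENNReal.ofReal (1 + r) * p.1}

theorem isClosed_nearDiag (r : ℝ) : IsClosed (nearDiag r) :=
  (isClosed_le continuous_fst continuous_snd).inter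
    (isClosed_le continuous_snd ((ENNReal.continuous_const_mul ENNReal.ofReal_ne_top).comp
      continuous_fst))

theorem nearDiag_mono {r s : ℝ} (hrs : r ≤ s) : nearDiag r ⊆ nearDiag s :=
  fun _ hp => ⟨hp.1, hp.2.trans (mul_le_mul_left (ENNReal.ofReal_le_ofReal (by linarith)) _)⟩

theorem sum_mem_nearDiag {ι : Type*} {r : ℝ} (s : Finset ι) {p : ι → ℝ≥0∞ × ℝ≥0∞}
    (hp : ∀ i ∈ s, p i ∈ nearDiag r) : ∑ i ∈ s, p i ∈ nearDiag r := by
  refine Finset.sum_induction p (· ∈ nearDiag r) (fun a b ha hb => ⟨?_, ?_⟩) (by simp [nearDiag])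
    hp
  · exact add_le_add ha.1 hb.1
  · simpa [mul_add] using add_le_add ha.2 hb.2

theorem fst_eq_snd_of_forall_mem_nearDiag {p : ℝ≥0∞ × ℝ≥0∞}
    (hp : ∀ n : ℕ, p ∈ nearDiag (1 / (n + 1))) : p.1 = p.2 := by
  refine le_antisymm (hp 0).1 (ge_of_tendsto' (x := atTop) ?_ fun n => (hp n).2)
  have h : Tendsto (fun n : ℕ => ENNReal.ofReal (1 + 1 / (n + 1))) atTop (nhds 1) := by
    simpa using (ENNReal.tendsto_ofReal
      (tendsto_one_div_add_atTop_nhds_zero_nat.const_add (1 : ℝ)))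
  simpa using ENNReal.Tendsto.mul_const h (Or.inl one_ne_zero)

theorem prodMap_bpFun_mem_nearDiag {β : ℝ} (hβ : 0 < β) {c ρ r : ℝ}
    (hρ : ∀ ⦃x y s : ℝ⦄, 0 ≤ s → c ≤ x → x ≤ y → y ≤ (1 + s) * x →
      bpReal (tanh β) y ≤ (1 + ρ * s) * bpReal (tanh β) x)
    (hρ0 : 0 ≤ ρ) (hr : 0 ≤ r) {p : ℝ≥0∞ × ℝ≥0∞} (hc : ENNReal.ofReal c ≤ p.1)
    (hp : p ∈ nearDiag r) : Prod.map (bpFun β) (bpFun β) p ∈ nearDiag (ρ * r) := by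
  obtain ⟨u, v⟩ := p
  obtain ⟨huv, hvu⟩ := hp
  refine ⟨bpFun_mono hβ huv, ?_⟩
  dsimp only [Prod.map] at hc huv hvu ⊢
  rcases eq_or_ne u ⊤ with rfl | hu
  · rw [top_le_iff.1 huv]
    exact le_mul_of_one_le_left zero_le (ENNReal.one_le_ofReal.2 (by nlinarith))
  have hv : v ≠ ⊤ := ne_top_of_le_ne_top (ENNReal.mul_ne_top ENNReal.ofReal_ne_top hu) hvu
  have hcx : c ≤ u.toReal := (ENNReal.ofReal_le_iff_le_toReal hu).1 hc
  have hxy : u.toReal ≤ v.toReal := ENNReal.toReal_mono hv huv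
  have hyx : v.toReal ≤ (1 + r) * u.toReal := by
    rw [← ENNReal.ofReal_toReal hu, ← ENNReal.ofReal_mul (by linarith)] at hvu
    exact ENNReal.toReal_le_of_le_ofReal (by nlinarith [ENNReal.toReal_nonneg (a := u)]) hvu
  rw [bpFun_of_ne_top β hu, bpFun_of_ne_top β hv, ← ENNReal.ofReal_mul (by nlinarith)]
  exact ENNReal.ofReal_le_ofReal (hρ hr hcx hxy hyx)

theorem prodMap_bpFun_mem_nearDiag_of_snd_eq_top {β : ℝ} (hβ : 0 < β) {c : ℝ} (hc : 0 < c)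
    {p : ℝ≥0∞ × ℝ≥0∞} (hp1 : ENNReal.ofReal c ≤ p.1) (hp2 : p.2 = ⊤) :
    Prod.map (bpFun β) (bpFun β) p ∈ nearDiag (β / bpReal (tanh β) c - 1) := by
  obtain ⟨u, v⟩ := p
  dsimp only at hp1 hp2
  subst hp2
  refine ⟨bpFun_mono hβ le_top, ?_⟩
  dsimp only [Prod.map]
  have hlow : ENNReal.ofReal (bpReal (tanh β) c) ≤ bpFun β u :=
    bpFun_ofReal β hc.le ▸ bpFun_mono hβ hp1
  have hL := bpReal_pos (tanh_mem_Ioo hβ) hc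
  calc bpFun β ⊤ = ENNReal.ofReal (β / bpReal (tanh β) c) * ENNReal.ofReal (bpReal (tanh β) c) := by
        rw [bpFun_top, ← ENNReal.ofReal_mul (div_nonneg hβ.le hL.le), div_mul_cancel₀ _ hL.ne']
    _ ≤ ENNReal.ofReal (1 + (β / bpReal (tanh β) c - 1)) * bpFun β u := by
        rw [add_sub_cancel]
        gcongr

theorem ofReal_le_sum_bpFun {β₀ β c n : ℝ} (hβ₀ : 0 < β₀) (hββ₀ : β₀ ≤ β) (hc : 0 ≤ c)
    (hbar : c ≤ n * bpReal (tanh β₀) c) {j : ℕ} (hj : n ≤ j) {u : Fin j → ℝ≥0∞}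
    (hu : ∀ ℓ, ENNReal.ofReal c ≤ u ℓ) : ENNReal.ofReal c ≤ ∑ ℓ, bpFun β (u ℓ) := by
  have hβ : 0 < β := hβ₀.trans_le hββ₀
  have hL₀ : 0 ≤ bpReal (tanh β₀) c := bpReal_zero (tanh β₀) ▸ bpReal_mono (tanh_mem_Ioo hβ₀) hc
  have hL : bpReal (tanh β₀) c ≤ bpReal (tanh β) c :=
    bpReal_mono_left (tanh_mem_Ioo hβ₀) (tanh_mem_Ioo hβ) (tanh_strictMono.monotone hββ₀) hc
  calc ENNReal.ofReal c ≤ ENNReal.ofReal (j * bpReal (tanh β) c) :=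
        ENNReal.ofReal_le_ofReal (hbar.trans (by nlinarith))
    _ = ∑ _ℓ : Fin j, bpFun β (ENNReal.ofReal c) := by
        rw [Finset.sum_const, Finset.card_univ, Fintype.card_fin, nsmul_eq_mul, bpFun_ofReal β hc,
          ENNReal.ofReal_mul (Nat.cast_nonneg _), ENNReal.ofReal_natCast]
    _ ≤ ∑ ℓ, bpFun β (u ℓ) := Finset.sum_le_sum fun ℓ _ => bpFun_mono hβ (hu ℓ)

theorem tsum_sizeBias_eq_one {P : ℕ → ℝ} {m : ℝ} (hP0 : ∀ k, 0 ≤ P k)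
    (hm : HasSum (fun k : ℕ => (k : ℝ) * P k) m) (hmpos : 0 < m) :
    ∑' k : ℕ, ENNReal.ofReal ((k : ℝ) * P k / m) = 1 := by
  rw [← ENNReal.ofReal_tsum_of_nonneg (fun k => by have := hP0 k; positivity)
    (hm.div_const m).summable, (hm.div_const m).tsum_eq, div_self hmpos.ne', ENNReal.ofReal_one]

section branchMap

variable {X Y : Type*} [MeasurableSpace X] [MeasurableSpace Y] {P : ℕ → ℝ} {m : ℝ}

noncomputable def branchMap (P : ℕ → ℝ) (m : ℝ) (F : ∀ n : ℕ, (Fin n → X) → Y)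
    (μ : Measure X) : Measure Y :=
  Measure.sum fun k : ℕ =>
    ENNReal.ofReal ((k : ℝ) * P k / m) • (Measure.pi fun _ : Fin (k - 1) => μ).map (F (k - 1))

theorem bpMap_eq_branchMap (P : ℕ → ℝ) (m β : ℝ) :
    bpMap P m β = branchMap P m fun _ h => ∑ ℓ, bpFun β (h ℓ) := rfl

theorem isProbabilityMeasure_branchMap
    (hq : ∑' k : ℕ, ENNReal.ofReal ((k : ℝ) * P k / m) = 1)
    {F : ∀ n : ℕ, (Fin n → X) → Y} (hF : ∀ n, Measurable (F n)) (μ : Measure X)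
    [IsProbabilityMeasure μ] : IsProbabilityMeasure (branchMap P m F μ) :=
  ⟨by simp [branchMap, Measure.map_apply (hF _) MeasurableSet.univ, hq]⟩

theorem isProbabilityMeasure_iterate_branchMap
    (hq : ∑' k : ℕ, ENNReal.ofReal ((k : ℝ) * P k / m) = 1)
    {F : ∀ n : ℕ, (Fin n → X) → X} (hF : ∀ n, Measurable (F n)) (μ : Measure X)
    [IsProbabilityMeasure μ] (t : ℕ) : IsProbabilityMeasure ((branchMap P m F)^[t] μ) := by
  induction t with
  | zero => assumption
  | succ t ih =>
    rw [Function.iterate_succ_apply']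
    exact isProbabilityMeasure_branchMap hq hF _

theorem ae_mem_branchMap {F : ∀ n : ℕ, (Fin n → X) → Y} (hF : ∀ n, Measurable (F n))
    {S : Set X} {T : Set Y} (hT : MeasurableSet T)
    (hST : ∀ k, P k ≠ 0 → ∀ h : Fin (k - 1) → X, (∀ ℓ, h ℓ ∈ S) → F (k - 1) h ∈ T)
    {μ : Measure X} [SigmaFinite μ] (hμ : ∀ᵐ x ∂μ, x ∈ S) :
    ∀ᵐ y ∂branchMap P m F μ, y ∈ T := by
  refine Measure.ae_sum_iff.2 fun k => ?_
  rcases eq_or_ne (P k) 0 with hPk | hPk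
  · simp [hPk]
  refine Measure.ae_smul_measure ((ae_map_iff (hF _).aemeasurable hT).2 ?_) _
  have hall : ∀ᵐ h ∂Measure.pi fun _ : Fin (k - 1) => μ, ∀ ℓ, h ℓ ∈ S :=
    eventually_all.2 fun ℓ => Measure.tendsto_eval_ae_ae.eventually hμ
  exact hall.mono fun h hh => hST k hPk h hh

theorem ae_mem_iterate_branchMap
    (hq : ∑' k : ℕ, ENNReal.ofReal ((k : ℝ) * P k / m) = 1)
    {F : ∀ n : ℕ, (Fin n → X) → X} (hF : ∀ n, Measurable (F n)) {S : ℕ → Set X}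
    (hS : ∀ t, MeasurableSet (S (t + 1)))
    (hstep : ∀ t k, P k ≠ 0 → ∀ h : Fin (k - 1) → X, (∀ ℓ, h ℓ ∈ S t) → F (k - 1) h ∈ S (t + 1))
    {μ : Measure X} [IsProbabilityMeasure μ] (hμ : ∀ᵐ x ∂μ, x ∈ S 0) (t : ℕ) :
    ∀ᵐ x ∂(branchMap P m F)^[t] μ, x ∈ S t := by
  induction t with
  | zero => exact hμ
  | succ t ih =>
    have := isProbabilityMeasure_iterate_branchMap hq hF μ t
    rw [Function.iterate_succ_apply']
    exact ae_mem_branchMap hF (hS t) (hstep t) ih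

theorem map_branchMap {Z W : Type*} [MeasurableSpace Z] [MeasurableSpace W]
    {F : ∀ n : ℕ, (Fin n → X) → Y} {G : ∀ n : ℕ, (Fin n → Z) → W} {f : X → Z} {g : Y → W}
    (hF : ∀ n, Measurable (F n)) (hG : ∀ n, Measurable (G n)) (hf : Measurable f)
    (hg : Measurable g) (hcomm : ∀ n (h : Fin n → X), g (F n h) = G n (f ∘ h))
    (μ : Measure X) [IsProbabilityMeasure μ] :
    (branchMap P m F μ).map g = branchMap P m G (μ.map f) := by
  have := Measure.isProbabilityMeasure_map (μ := μ) hf.aemeasurable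
  rw [branchMap, Measure.map_sum hg.aemeasurable]
  congr 1
  funext k
  have hpi : (Measure.pi fun _ : Fin (k - 1) => μ).map (fun h => f ∘ h) =
      Measure.pi fun _ => μ.map f :=
    (measurePreserving_pi _ _ fun _ => ⟨hf, rfl⟩).map_eq
  have hmeas : Measurable fun h : Fin (k - 1) → X => f ∘ h :=
    measurable_pi_lambda _ fun ℓ => hf.comp (measurable_pi_apply ℓ)
  rw [Measure.map_smul, Measure.map_map hg (hF _),
    show g ∘ F (k - 1) = G (k - 1) ∘ fun h => f ∘ h from funext (hcomm (k - 1)),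
    ← Measure.map_map (hG _) hmeas, hpi]

theorem map_iterate_branchMap {Z : Type*} [MeasurableSpace Z]
    (hq : ∑' k : ℕ, ENNReal.ofReal ((k : ℝ) * P k / m) = 1)
    {F : ∀ n : ℕ, (Fin n → X) → X} {G : ∀ n : ℕ, (Fin n → Z) → Z} {f : X → Z}
    (hF : ∀ n, Measurable (F n)) (hG : ∀ n, Measurable (G n)) (hf : Measurable f)
    (hcomm : ∀ n (h : Fin n → X), f (F n h) = G n (f ∘ h))
    (μ : Measure X) [IsProbabilityMeasure μ] (t : ℕ) :
    ((branchMap P m F)^[t] μ).map f = (branchMap P m G)^[t] (μ.map f) := by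
  induction t with
  | zero => rfl
  | succ t ih =>
    have := isProbabilityMeasure_iterate_branchMap hq hF μ t
    rw [Function.iterate_succ_apply', Function.iterate_succ_apply',
      map_branchMap hF hG hf hf hcomm, ih]

end branchMap

theorem Continuous.integrable_of_compactSpace {X : Type*} [TopologicalSpace X] [CompactSpace X]
    [MeasurableSpace X] [OpensMeasurableSpace X] {μ : Measure X} [IsFiniteMeasure μ] {g : X → ℝ}
    (hg : Continuous g) : Integrable g μ :=
  hg.integrable_of_hasCompactSupport (HasCompactSupport.of_compactSpace g)

theorem exists_forall_lt_of_forall_iInter_lt {X : Type*} [TopologicalSpace X] [CompactSpace X]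
    {K : ℕ → Set X} (hK : ∀ n, IsClosed (K n)) (hanti : Antitone K) {f : X → ℝ}
    (hf : Continuous f) {ε : ℝ} (hε : ∀ x ∈ ⋂ n, K n, f x < ε) : ∃ n, ∀ x ∈ K n, f x < ε := by
  by_contra! hbad
  have hclosed n : IsClosed (K n ∩ {x | ε ≤ f x}) := (hK n).inter (isClosed_le continuous_const hf)
  obtain ⟨x, hx⟩ := IsCompact.nonempty_iInter_of_sequence_nonempty_isCompact_isClosed
    (fun n => K n ∩ {x | ε ≤ f x}) (fun n => inter_subset_inter_left _ (hanti n.le_succ)) hbad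
    (hclosed 0).isCompact hclosed
  rw [mem_iInter] at hx
  exact (hε x (mem_iInter.2 fun n => (hx n).1)).not_ge (hx 0).2

theorem exists_pos_forall_mem_nearDiag_abs_sub_lt {g : ℝ≥0∞ → ℝ} (hg : Continuous g) {ε : ℝ}
    (hε : 0 < ε) : ∃ δ > 0, ∀ r ≤ δ, ∀ p ∈ nearDiag r, |g p.1 - g p.2| < ε := by
  obtain ⟨n, hn⟩ := exists_forall_lt_of_forall_iInter_lt (K := fun n : ℕ => nearDiag (1 / (n + 1)))
    (fun n => isClosed_nearDiag _)
    (antitone_nat_of_succ_le fun n => nearDiag_mono (by gcongr; simp))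
    (by fun_prop : Continuous fun p : ℝ≥0∞ × ℝ≥0∞ => |g p.1 - g p.2|)
    fun p hp => by
      rw [fst_eq_snd_of_forall_mem_nearDiag (mem_iInter.1 hp), sub_self, abs_zero]; exact hε
  exact ⟨1 / (n + 1), by positivity, fun r hr p hp => hn p (nearDiag_mono hr hp)⟩

theorem measure_Ici_eq_one_of_weakTendsto {μs : ℕ → Measure ℝ≥0∞}
    [∀ t, IsProbabilityMeasure (μs t)] {ν : Measure ℝ≥0∞} [IsProbabilityMeasure ν]
    (h : WeakTendsto μs ν) {a b : ℝ≥0∞} (hba : b < a) (hμs : ∀ t, ∀ᵐ x ∂μs t, a ≤ x) :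
    ν (Ici b) = 1 := by
  obtain ⟨f, hf0, hf1, hf01⟩ := exists_continuous_zero_one_of_isClosed isClosed_Iic isClosed_Ici
    (Iic_disjoint_Ici.2 hba.not_ge)
  have hint : ∀ t, ∫ x, f x ∂μs t = 1 := fun t => by
    rw [integral_congr_ae ((hμs t).mono fun x hx => hf1 hx)]
    simp
  have hlim : ∫ x, f x ∂ν = 1 :=
    tendsto_nhds_unique ((h f f.continuous).congr hint) tendsto_const_nhds
  have hle : ∫ x, f x ∂ν ≤ ν.real (Ici b) := by
    rw [← integral_indicator_one measurableSet_Ici]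
    refine integral_mono f.continuous.integrable_of_compactSpace
      ((integrable_const 1).indicator measurableSet_Ici) fun x => ?_
    by_cases hx : x ∈ Ici b
    · simpa [indicator_of_mem hx] using (hf01 x).2
    · rw [indicator_of_notMem hx, hf0 (mem_Iic.2 (not_le.1 hx).le)]
      rfl
  refine le_antisymm prob_le_one ?_
  rw [← ENNReal.ofReal_one, ← hlim]
  exact ENNReal.ofReal_le_of_le_toReal hle

theorem ae_le_of_measure_Ici_le {μ ν : Measure ℝ≥0∞} [IsProbabilityMeasure μ] {b : ℝ≥0∞}
    (hν : ν (Ici b) = 1) (hdom : ν (Ici b) ≤ μ (Ici b)) : ∀ᵐ x ∂μ, b ≤ x :=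
  mem_ae_iff.2 ((prob_compl_eq_zero_iff measurableSet_Ici).2
    (le_antisymm prob_le_one (hν ▸ hdom)))

theorem weakTendsto_of_coupling {μs νs : ℕ → Measure ℝ≥0∞} {ν : Measure ℝ≥0∞}
    (hν : WeakTendsto νs ν) {Λ : ℕ → Measure (ℝ≥0∞ × ℝ≥0∞)} [∀ t, IsProbabilityMeasure (Λ t)]
    (hfst : ∀ t, (Λ t).map Prod.fst = μs t) (hsnd : ∀ t, (Λ t).map Prod.snd = νs t)
    {r : ℕ → ℝ} (hr : Tendsto r atTop (nhds 0))
    (hΛ : ∀ᶠ t in atTop, ∀ᵐ p ∂Λ t, p ∈ nearDiag (r t)) :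
    WeakTendsto μs ν := by
  intro g hg
  have hsplit : ∀ t, ∫ x, g x ∂μs t = ∫ p, g p.1 - g p.2 ∂Λ t + ∫ x, g x ∂νs t := fun t => by
    have hfst_int : Integrable (fun p : ℝ≥0∞ × ℝ≥0∞ => g p.1) (Λ t) :=
      (hg.comp continuous_fst).integrable_of_compactSpace
    have hsnd_int : Integrable (fun p : ℝ≥0∞ × ℝ≥0∞ => g p.2) (Λ t) :=
      (hg.comp continuous_snd).integrable_of_compactSpace
    rw [← hfst, ← hsnd, integral_map measurable_fst.aemeasurable hg.aestronglyMeasurable,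
      integral_map measurable_snd.aemeasurable hg.aestronglyMeasurable,
      integral_sub hfst_int hsnd_int, sub_add_cancel]
  have hsmall : Tendsto (fun t => ∫ p, g p.1 - g p.2 ∂Λ t) atTop (nhds 0) := by
    refine Metric.tendsto_atTop.2 fun ε hε => ?_
    obtain ⟨δ, hδ, hmod⟩ := exists_pos_forall_mem_nearDiag_abs_sub_lt hg (half_pos hε)
    obtain ⟨N, hN⟩ := eventually_atTop.1 (hΛ.and (hr.eventually (gt_mem_nhds hδ)))
    refine ⟨N, fun t ht => ?_⟩
    obtain ⟨hae, hrt⟩ := hN t ht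
    rw [dist_zero_right]
    calc ‖∫ p, g p.1 - g p.2 ∂Λ t‖ ≤ ε / 2 * (Λ t).real univ :=
          norm_integral_le_of_norm_le_const (hae.mono fun p hp => (hmod _ hrt.le p hp).le)
      _ < ε := by simp [hε]
  simpa [hsplit] using hsmall.add (hν g hg)

theorem pos_and_one_lt_mul_tanh_of_half_log_lt {n β : ℝ} (hn : 1 < n)
    (hβ : (1 / 2) * Real.log ((1 + 1 / n) / (1 - 1 / n)) < β) : 0 < β ∧ 1 < n * tanh β := by
  have hn0 : 0 < n := by linarith
  have hinv : 1 / n ∈ Ioo (-1) 1 :=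
    ⟨by linarith [one_div_pos.2 hn0], (div_lt_one hn0).2 hn⟩
  rw [← artanh_eq_half_log (Ioo_subset_Icc_self hinv)] at hβ
  refine ⟨(artanh_pos ⟨one_div_pos.2 hn0, hinv.2⟩).trans hβ, ?_⟩
  have := tanh_strictMono hβ
  rw [tanh_artanh hinv, div_lt_iff₀ hn0] at this
  linarith

theorem sub_one_le_natCast_sub_one_of_ne_zero {P : ℕ → ℝ} {d : ℕ} (hd : 1 ≤ d)
    (hPmin : ∀ k, k < d → P k = 0) {k : ℕ} (hk : P k ≠ 0) : (d : ℝ) - 1 ≤ ((k - 1 : ℕ) : ℝ) := by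
  have hdk := not_lt.1 (mt (hPmin k) hk)
  rw [Nat.cast_sub (hd.trans hdk), Nat.cast_one]
  exact sub_le_sub_right (by exact_mod_cast hdk) 1

section bpMapPair

variable {P : ℕ → ℝ} {m β : ℝ}

noncomputable def bpMapPair (P : ℕ → ℝ) (m β : ℝ) :
    Measure (ℝ≥0∞ × ℝ≥0∞) → Measure (ℝ≥0∞ × ℝ≥0∞) :=
  branchMap P m fun _ h => ∑ ℓ, Prod.map (bpFun β) (bpFun β) (h ℓ)

theorem measurable_sum_bpFun (hβ : 0 < β) (n : ℕ) :
    Measurable fun h : Fin n → ℝ≥0∞ => ∑ ℓ, bpFun β (h ℓ) :=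
  Finset.measurable_sum _ fun ℓ _ => (measurable_bpFun hβ).comp (measurable_pi_apply ℓ)

theorem measurable_sum_prodMap_bpFun (hβ : 0 < β) (n : ℕ) :
    Measurable fun h : Fin n → ℝ≥0∞ × ℝ≥0∞ => ∑ ℓ, Prod.map (bpFun β) (bpFun β) (h ℓ) :=
  Finset.measurable_sum _ fun ℓ _ =>
    ((measurable_bpFun hβ).prodMap (measurable_bpFun hβ)).comp (measurable_pi_apply ℓ)

theorem map_fst_iterate_bpMapPair (hβ : 0 < β)
    (hq : ∑' k : ℕ, ENNReal.ofReal ((k : ℝ) * P k / m) = 1) (Λ : Measure (ℝ≥0∞ × ℝ≥0∞))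
    [IsProbabilityMeasure Λ] (t : ℕ) :
    ((bpMapPair P m β)^[t] Λ).map Prod.fst = (bpMap P m β)^[t] (Λ.map Prod.fst) :=
  map_iterate_branchMap hq (measurable_sum_prodMap_bpFun hβ) (measurable_sum_bpFun hβ)
    measurable_fst (fun _ _ => Prod.fst_sum ..) Λ t

theorem map_snd_iterate_bpMapPair (hβ : 0 < β)
    (hq : ∑' k : ℕ, ENNReal.ofReal ((k : ℝ) * P k / m) = 1) (Λ : Measure (ℝ≥0∞ × ℝ≥0∞))
    [IsProbabilityMeasure Λ] (t : ℕ) :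
    ((bpMapPair P m β)^[t] Λ).map Prod.snd = (bpMap P m β)^[t] (Λ.map Prod.snd) :=
  map_iterate_branchMap hq (measurable_sum_prodMap_bpFun hβ) (measurable_sum_bpFun hβ)
    measurable_snd (fun _ _ => Prod.snd_sum ..) Λ t

theorem ae_ofReal_le_iterate_bpMap {β₀ c n : ℝ} (hβ₀ : 0 < β₀) (hββ₀ : β₀ ≤ β) (hc : 0 ≤ c)
    (hbar : c ≤ n * bpReal (tanh β₀) c) (hdeg : ∀ k, P k ≠ 0 → n ≤ ((k - 1 : ℕ) : ℝ))
    (hq : ∑' k : ℕ, ENNReal.ofReal ((k : ℝ) * P k / m) = 1) {μ : Measure ℝ≥0∞}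
    [IsProbabilityMeasure μ] (hμ : ∀ᵐ x ∂μ, ENNReal.ofReal c ≤ x) (t : ℕ) :
    ∀ᵐ x ∂(bpMap P m β)^[t] μ, ENNReal.ofReal c ≤ x := by
  rw [bpMap_eq_branchMap]
  exact ae_mem_iterate_branchMap (S := fun _ => Ici (ENNReal.ofReal c)) hq
    (measurable_sum_bpFun (hβ₀.trans_le hββ₀)) (fun _ => measurableSet_Ici)
    (fun _ k hk _ hh => ofReal_le_sum_bpFun hβ₀ hββ₀ hc hbar (hdeg k hk) hh) hμ t

theorem sum_prodMap_bpFun_mem {β₀ c n r : ℝ} (hβ₀ : 0 < β₀) (hββ₀ : β₀ ≤ β) (hc : 0 ≤ c)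
    (hbar : c ≤ n * bpReal (tanh β₀) c) {j : ℕ} (hj : n ≤ j) {h : Fin j → ℝ≥0∞ × ℝ≥0∞}
    (hfst : ∀ ℓ, ENNReal.ofReal c ≤ (h ℓ).1)
    (hnear : ∀ ℓ, Prod.map (bpFun β) (bpFun β) (h ℓ) ∈ nearDiag r) :
    ∑ ℓ, Prod.map (bpFun β) (bpFun β) (h ℓ) ∈ Prod.fst ⁻¹' Ici (ENNReal.ofReal c) ∩ nearDiag r :=
  ⟨by simpa [Prod.fst_sum] using ofReal_le_sum_bpFun hβ₀ hββ₀ hc hbar hj hfst,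
    sum_mem_nearDiag _ fun ℓ _ => hnear ℓ⟩

theorem ae_mem_nearDiag_iterate_bpMapPair {β₀ c n ρ : ℝ} (hβ₀ : 0 < β₀) (hββ₀ : β₀ ≤ β)
    (hc : 0 < c) (hbar : c ≤ n * bpReal (tanh β₀) c)
    (hdeg : ∀ k, P k ≠ 0 → n ≤ ((k - 1 : ℕ) : ℝ))
    (hq : ∑' k : ℕ, ENNReal.ofReal ((k : ℝ) * P k / m) = 1) (hρ0 : 0 ≤ ρ)
    (hρ : ∀ ⦃x y s : ℝ⦄, 0 ≤ s → c ≤ x → x ≤ y → y ≤ (1 + s) * x →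
      bpReal (tanh β) y ≤ (1 + ρ * s) * bpReal (tanh β) x)
    {μ : Measure ℝ≥0∞} [IsProbabilityMeasure μ] (hμ : ∀ᵐ x ∂μ, ENNReal.ofReal c ≤ x) (t : ℕ) :
    ∀ᵐ p ∂(bpMapPair P m β)^[t + 1] (μ.prod (Measure.dirac ⊤)),
      p ∈ nearDiag ((β / bpReal (tanh β) c - 1) * ρ ^ t) := by
  have hβ : 0 < β := hβ₀.trans_le hββ₀
  set R₀ := β / bpReal (tanh β) c - 1
  have hR₀ : 0 ≤ R₀ := by
    have hL := bpReal_pos (tanh_mem_Ioo hβ) hc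
    rw [sub_nonneg, le_div_iff₀ hL, one_mul]
    exact (bpReal_le_artanh (tanh_mem_Ioo hβ) c).trans_eq (artanh_tanh β)
  let S : ℕ → Set (ℝ≥0∞ × ℝ≥0∞)
    | 0 => Prod.fst ⁻¹' Ici (ENNReal.ofReal c) ∩ Prod.snd ⁻¹' {⊤}
    | t + 1 => Prod.fst ⁻¹' Ici (ENNReal.ofReal c) ∩ nearDiag (R₀ * ρ ^ t)
  have hS : ∀ t, MeasurableSet (S (t + 1)) := fun t =>
    (measurableSet_Ici.preimage measurable_fst).inter (isClosed_nearDiag _).measurableSet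
  have hstep : ∀ t k, P k ≠ 0 → ∀ h : Fin (k - 1) → ℝ≥0∞ × ℝ≥0∞, (∀ ℓ, h ℓ ∈ S t) →
      ∑ ℓ, Prod.map (bpFun β) (bpFun β) (h ℓ) ∈ S (t + 1) := by
    rintro (_ | t) k hk h hh <;>
      refine sum_prodMap_bpFun_mem hβ₀ hββ₀ hc.le hbar (hdeg k hk) (fun ℓ => (hh ℓ).1) fun ℓ => ?_
    · rw [pow_zero, mul_one]
      exact prodMap_bpFun_mem_nearDiag_of_snd_eq_top hβ hc (hh ℓ).1 (hh ℓ).2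
    · rw [pow_succ, ← mul_assoc, mul_comm _ ρ]
      exact prodMap_bpFun_mem_nearDiag hβ hρ hρ0 (by positivity) (hh ℓ).1 (hh ℓ).2
  have hbase : ∀ᵐ p ∂μ.prod (Measure.dirac ⊤), p ∈ S 0 := by
    have hS0 : MeasurableSet (S 0) := (measurableSet_Ici.preimage measurable_fst).inter
      ((measurableSet_singleton _).preimage measurable_snd)
    rw [Measure.prod_dirac]
    exact (ae_map_iff measurable_prodMk_right.aemeasurable hS0).2 (hμ.mono fun x hx => ⟨hx, rfl⟩)
  exact (ae_mem_iterate_branchMap hq (measurable_sum_prodMap_bpFun hβ) hS hstep hbase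
    (t + 1)).mono fun p hp => hp.2

theorem weakTendsto_iterate_bpMap_of_ae_le {β₀ c n : ℝ} (hβ₀ : 0 < β₀) (hββ₀ : β₀ ≤ β)
    (hc : 0 < c) (hbar : c ≤ n * bpReal (tanh β₀) c)
    (hdeg : ∀ k, P k ≠ 0 → n ≤ ((k - 1 : ℕ) : ℝ))
    (hq : ∑' k : ℕ, ENNReal.ofReal ((k : ℝ) * P k / m) = 1) {μ ν : Measure ℝ≥0∞}
    [IsProbabilityMeasure μ] (hμ : ∀ᵐ x ∂μ, ENNReal.ofReal c ≤ x)
    (hν : WeakTendsto (fun t => (bpMap P m β)^[t] (Measure.dirac ⊤)) ν) :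
    WeakTendsto (fun t => (bpMap P m β)^[t] μ) ν := by
  have hβ : 0 < β := hβ₀.trans_le hββ₀
  obtain ⟨ρ, hρ, hcontr⟩ := exists_bpReal_contraction (tanh_mem_Ioo hβ) hc
  have : ∀ t, IsProbabilityMeasure ((bpMapPair P m β)^[t] (μ.prod (Measure.dirac ⊤))) :=
    isProbabilityMeasure_iterate_branchMap hq (measurable_sum_prodMap_bpFun hβ) _
  refine weakTendsto_of_coupling hν
    (Λ := fun t => (bpMapPair P m β)^[t] (μ.prod (Measure.dirac ⊤)))
    (fun t => by simp [map_fst_iterate_bpMapPair hβ hq])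
    (fun t => by simp [map_snd_iterate_bpMapPair hβ hq])
    (r := fun t => (β / bpReal (tanh β) c - 1) * ρ ^ (t - 1)) ?_ ?_
  · simpa using ((tendsto_pow_atTop_nhds_zero_of_lt_one hρ.1 hρ.2).comp
      (tendsto_sub_atTop_nat 1)).const_mul (β / bpReal (tanh β) c - 1)
  · refine eventually_atTop.2 ⟨1, fun t ht => ?_⟩
    obtain ⟨s, rfl⟩ := Nat.exists_eq_add_of_le' ht
    simpa using ae_mem_nearDiag_iterate_bpMapPair hβ₀ hββ₀ hc hbar hdeg hq hρ.1 hcontr hμ s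

end bpMapPair

theorem bp_recursion_attraction_general
    (P : ℕ → ℝ) (dstar : ℕ) (hd : 3 ≤ dstar)
    (hP0 : ∀ k, 0 ≤ P k)
    (hPmin : ∀ k, k < dstar → P k = 0)
    (m : ℝ) (hm : HasSum (fun k : ℕ => (k : ℝ) * P k) m) (hmpos : 0 < m)
    (β β₀ : ℝ) (hββ₀ : β₀ ≤ β)
    (hβ₀ : (1 / 2) * Real.log ((1 + (1 : ℝ) / (dstar - 1)) / (1 - (1 : ℝ) / (dstar - 1))) < β₀)
    (νβ νβ₀ : Measure ℝ≥0∞) [IsProbabilityMeasure νβ₀]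
    (hνβ : WeakTendsto (fun t => (bpMap P m β)^[t] (Measure.dirac ⊤)) νβ)
    (hνβ₀ : WeakTendsto (fun t => (bpMap P m β₀)^[t] (Measure.dirac ⊤)) νβ₀)
    (μ₀ : Measure ℝ≥0∞) [IsProbabilityMeasure μ₀]
    (hdom : ∀ s : ℝ≥0∞, νβ₀ (Set.Ici s) ≤ μ₀ (Set.Ici s)) :
    WeakTendsto (fun t => (bpMap P m β)^[t] μ₀) νβ := by
  have hd' : (3 : ℝ) ≤ dstar := by exact_mod_cast hd
  obtain ⟨hβ₀pos, hn⟩ :=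
    pos_and_one_lt_mul_tanh_of_half_log_lt (n := (dstar : ℝ) - 1) (by linarith) hβ₀
  have hdeg k := sub_one_le_natCast_sub_one_of_ne_zero (by omega) hPmin (k := k)
  have hq := tsum_sizeBias_eq_one hP0 hm hmpos
  obtain ⟨c, hc, hbar⟩ := exists_le_mul_bpReal (tanh_mem_Ioo hβ₀pos) hn
  have : ∀ t, IsProbabilityMeasure ((bpMap P m β₀)^[t] (Measure.dirac ⊤)) :=
    isProbabilityMeasure_iterate_branchMap hq (measurable_sum_bpFun hβ₀pos) _
  have hμ₀ : ∀ᵐ x ∂μ₀, ENNReal.ofReal (c / 2) ≤ x := ae_le_of_measure_Ici_le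
    (measure_Ici_eq_one_of_weakTendsto hνβ₀ ((ENNReal.ofReal_lt_ofReal_iff hc).2 (half_lt_self hc))
      (ae_ofReal_le_iterate_bpMap hβ₀pos le_rfl hc.le (hbar c ⟨hc.le, le_rfl⟩) hdeg hq
        ((ae_dirac_iff measurableSet_Ici).2 le_top))) (hdom _)
  exact weakTendsto_iterate_bpMap_of_ae_le hβ₀pos hββ₀ (half_pos hc)
    (hbar _ ⟨(half_pos hc).le, half_le_self hc.le⟩) hdeg hq hμ₀ hνβ

/-- **Attraction to the plus fixed point of the BP recursion** (Lemma 1.8).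
Let `P` be an offspring law with minimum degree `d⋆ ≥ 3`, finite positive mean
`m` and finite second factorial moment, and `β ≥ β₀ > β⋆ = atanh(1/(d⋆-1))`.
If the BP iterates started from `δ_∞` converge weakly to `ν_β⁺` (resp. `ν_{β₀}⁺`),
then from any initial law `μ₀` stochastically dominating `ν_{β₀}⁺` the iterates
of `Φ_β` converge weakly to `ν_β⁺`. -/
theorem bp_recursion_attraction
    (P : ℕ → ℝ) (dstar : ℕ) (hd : 3 ≤ dstar)
    (hP0 : ∀ k, 0 ≤ P k) (hP1 : ∑' k, P k = 1)
    (hPmin : ∀ k, k < dstar → P k = 0)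
    (m : ℝ) (hm : HasSum (fun k : ℕ => (k : ℝ) * P k) m) (hmpos : 0 < m)
    (hsecond : Summable fun k : ℕ => (k : ℝ) * ((k : ℝ) - 1) * P k)
    (β β₀ : ℝ) (hββ₀ : β₀ ≤ β)
    (hβ₀ : (1 / 2) * Real.log ((1 + (1 : ℝ) / (dstar - 1)) / (1 - (1 : ℝ) / (dstar - 1))) < β₀)
    (νβ νβ₀ : Measure ℝ≥0∞) [IsProbabilityMeasure νβ] [IsProbabilityMeasure νβ₀]
    (hνβ : WeakTendsto (fun t => (bpMap P m β)^[t] (Measure.dirac ⊤)) νβ)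
    (hνβ₀ : WeakTendsto (fun t => (bpMap P m β₀)^[t] (Measure.dirac ⊤)) νβ₀)
    (μ₀ : Measure ℝ≥0∞) [IsProbabilityMeasure μ₀]
    (hdom : ∀ s : ℝ≥0∞, νβ₀ (Set.Ici s) ≤ μ₀ (Set.Ici s)) :
    WeakTendsto (fun t => (bpMap P m β)^[t] μ₀) νβ :=
  bp_recursion_attraction_general P dstar hd hP0 hPmin m hm hmpos β β₀ hββ₀ hβ₀ νβ νβ₀ hνβ hνβ₀ μ₀
    hdom
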